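/- (Lemma 1) Suppose y_1,…,y_n are independent random variables with E y_i = γ'(x_{i·}ᵀ β°) for a convex differentiable γ: ℝ → ℝ, and the centered responses ε_i = y_i − E y_i are σ-subgaussian, i.e. E exp(u ε_i) ≤ exp(σ² u² / 2) for all u ∈ ℝ. Let a ∈ (0,1), λ > 0, and let β̂ be a (measurable) random vector that almost surely minimizes β ↦ ℓ(β) + λ Σ_{k=1}^r ‖W_k β_k‖ over ℝ^p, where ℓ(β) = Σ_{i=1}^n [γ(x_{i·}ᵀβ) − y_i x_{i·}ᵀβ]. Assume ζ_{a,W} > 0. Then P( |β̂ − β°|_∞ > (1 + a) λ ζ_{a,W}^{-1} ) ≤ 2 p exp( − a² λ² / (2 σ² x_W²) ). -/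

import Mathlib

open MeasureTheory ProbabilityTheory
open scoped BigOperators ENNReal Classical

/-- The group norm `‖W_k β_k‖`. -/
noncomputable def groupNorm {r : ℕ} {p : Fin r → ℕ}
    (w β : ((k : Fin r) × Fin (p k)) → ℝ) (k : Fin r) : ℝ :=
  Real.sqrt (∑ j : Fin (p k), (w ⟨k, j⟩ * β ⟨k, j⟩) ^ 2)

/-- The sup norm `|v|_∞`. -/
noncomputable def supNorm {ι : Type*} [Fintype ι] (v : ι → ℝ) : ℝ := ⨆ c, |v c|

/-- The inner product `x_{i·}ᵀ β` of the `i`-th row of the design `X` with `β`. -/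
def dotRow {n r : ℕ} {p : Fin r → ℕ}
    (X : Fin n → ((k : Fin r) × Fin (p k)) → ℝ) (i : Fin n)
    (β : ((k : Fin r) × Fin (p k)) → ℝ) : ℝ :=
  ∑ c, X i c * β c

/-- The Euclidean norm `‖x_{j,k}‖` of column `c = (j,k)` of `X`. -/
noncomputable def colNorm {n r : ℕ} {p : Fin r → ℕ}
    (X : Fin n → ((k : Fin r) × Fin (p k)) → ℝ) (c : (k : Fin r) × Fin (p k)) : ℝ :=
  Real.sqrt (∑ i, (X i c) ^ 2)

/-- `x_W = max_{j,k} ‖x_{j,k}‖ / w_{j,k}`. -/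
noncomputable def xW {n r : ℕ} {p : Fin r → ℕ}
    (X : Fin n → ((k : Fin r) × Fin (p k)) → ℝ)
    (w : ((k : Fin r) × Fin (p k)) → ℝ) : ℝ :=
  ⨆ c, colNorm X c / w c

/-- The negative log-likelihood loss `ℓ(β) = ∑_i [γ(x_{i·}ᵀβ) − y_i x_{i·}ᵀβ]`
(at sample point `ω`). -/
noncomputable def loss {Ω : Type*} {n r : ℕ} {p : Fin r → ℕ}
    (X : Fin n → ((k : Fin r) × Fin (p k)) → ℝ) (γ : ℝ → ℝ)
    (y : Fin n → Ω → ℝ) (ω : Ω) (β : ((k : Fin r) × Fin (p k)) → ℝ) : ℝ :=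
  ∑ i, (γ (dotRow X i β) - y i ω * dotRow X i β)

/-- Coordinate `c` of `∇ℓ(β° + ν) − ∇ℓ(β°)`, which does not depend on `y`:
`∑_i (γ'(x_{i·}ᵀ(β°+ν)) − γ'(x_{i·}ᵀβ°)) x_{i,c}`. -/
noncomputable def gradDiff {n r : ℕ} {p : Fin r → ℕ}
    (X : Fin n → ((k : Fin r) × Fin (p k)) → ℝ) (γ : ℝ → ℝ)
    (βo ν : ((k : Fin r) × Fin (p k)) → ℝ) (c : (k : Fin r) × Fin (p k)) : ℝ :=
  ∑ i, (deriv γ (dotRow X i (βo + ν)) - deriv γ (dotRow X i βo)) * X i c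

/-- Membership in the cone `C_{a,W}` where `S = {k : βo_k ≠ 0}`. -/
def InCone {r : ℕ} {p : Fin r → ℕ}
    (βo w : ((k : Fin r) × Fin (p k)) → ℝ) (a : ℝ)
    (v : ((k : Fin r) × Fin (p k)) → ℝ) : Prop :=
  ∑ k : Fin r, (if ∀ j : Fin (p k), βo ⟨k, j⟩ = 0 then groupNorm w v k else 0)
    ≤ ∑ k : Fin r, (if ∀ j : Fin (p k), βo ⟨k, j⟩ = 0 then 0 else groupNorm w v k)
      + a * ∑ c, |w c * v c|

/-- The Cone Invertibility Factor
`ζ_{a,W} = inf_{0 ≠ ν ∈ C_{a,W}} |W⁻¹(∇ℓ(β°+ν) − ∇ℓ(β°))|_∞ / |ν|_∞`. -/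
noncomputable def cif {n r : ℕ} {p : Fin r → ℕ}
    (X : Fin n → ((k : Fin r) × Fin (p k)) → ℝ) (γ : ℝ → ℝ)
    (βo w : ((k : Fin r) × Fin (p k)) → ℝ) (a : ℝ) : ℝ :=
  sInf {z : ℝ | ∃ ν : ((k : Fin r) × Fin (p k)) → ℝ, ν ≠ 0 ∧ InCone βo w a ν ∧
    z = supNorm (fun c => gradDiff X γ βo ν c / w c) / supNorm ν}

/-!
Let `ε_i = y_i - E y_i`. By the mean condition, `∇ℓ(β°)_c = -∑_i x_{ic} ε_i`, which is
subgaussian with variance proxy `σ² ‖x_c‖² ≤ σ² x_W² w_c²`; a union bound over the `p`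
coordinates gives probability at most `2p exp(-a²λ²/(2σ²x_W²))` that `|∇ℓ(β°)_c| ≥ aλ w_c`
for some `c`.

Off that event the estimate is deterministic. Testing optimality of `β̂` along a coordinate
direction gives the KKT bound `|∇ℓ(β̂)_c| ≤ λ w_c`, so
`|W⁻¹(∇ℓ(β̂) - ∇ℓ(β°))|_∞ ≤ (1 + a)λ`. Comparing `β̂` with `β°` in the objective, and bounding
`ℓ(β̂) - ℓ(β°)` from below by the tangent `∇ℓ(β°) · (β̂ - β°)` (convexity of `γ`), puts
`β̂ - β°` in the cone `C_{a,W}`. The definition of `ζ_{a,W}` as an infimum over that cone then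
gives `ζ_{a,W} |β̂ - β°|_∞ ≤ (1 + a)λ`.
-/

open Finset Real Filter Topology
open scoped NNReal

section SupNorm

variable {ι : Type*} [Fintype ι]

theorem supNorm_eq_norm (v : ι → ℝ) : supNorm v = ‖v‖ := by
  refine le_antisymm (Real.iSup_le (fun c => ?_) (norm_nonneg v)) ?_
  · rw [← Real.norm_eq_abs]
    exact norm_le_pi_norm v c
  · refine (pi_norm_le_iff_of_nonneg (Real.iSup_nonneg fun c => abs_nonneg _)).2 fun c => ?_
    exact le_ciSup (f := fun c => |v c|) (Set.finite_range _).bddAbove c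

end SupNorm

section GroupNorm

variable {r : ℕ} {p : Fin r → ℕ} (w : ((k : Fin r) × Fin (p k)) → ℝ)

theorem groupNorm_eq_norm (β : ((k : Fin r) × Fin (p k)) → ℝ) (k : Fin r) :
    groupNorm w β k
      = ‖(WithLp.toLp 2 fun j => w ⟨k, j⟩ * β ⟨k, j⟩ : EuclideanSpace ℝ (Fin (p k)))‖ := by
  simp only [groupNorm, EuclideanSpace.norm_eq, Real.norm_eq_abs, sq_abs]

theorem groupNorm_add_le (β ν : ((k : Fin r) × Fin (p k)) → ℝ) (k : Fin r) :
    groupNorm w (β + ν) k ≤ groupNorm w β k + groupNorm w ν k := by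
  simp only [groupNorm_eq_norm]
  calc _ = ‖(WithLp.toLp 2 fun j => w ⟨k, j⟩ * β ⟨k, j⟩ : EuclideanSpace ℝ (Fin (p k)))
          + WithLp.toLp 2 fun j => w ⟨k, j⟩ * ν ⟨k, j⟩‖ := by
        congr 1; ext j; simp [mul_add]
    _ ≤ _ := norm_add_le _ _

theorem groupNorm_neg (ν : ((k : Fin r) × Fin (p k)) → ℝ) (k : Fin r) :
    groupNorm w (-ν) k = groupNorm w ν k := by
  simp [groupNorm]

theorem groupNorm_congr {β ν : ((k : Fin r) × Fin (p k)) → ℝ} {k : Fin r}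
    (h : ∀ j, β ⟨k, j⟩ = ν ⟨k, j⟩) : groupNorm w β k = groupNorm w ν k := by
  simp [groupNorm, h]

theorem groupNorm_le_sum_abs (β : ((k : Fin r) × Fin (p k)) → ℝ) (k : Fin r) :
    groupNorm w β k ≤ ∑ j, |w ⟨k, j⟩ * β ⟨k, j⟩| := by
  calc groupNorm w β k = √(∑ j, |w ⟨k, j⟩ * β ⟨k, j⟩| ^ 2) := by simp only [groupNorm, sq_abs]
    _ ≤ √((∑ j, |w ⟨k, j⟩ * β ⟨k, j⟩|) ^ 2) :=
        Real.sqrt_le_sqrt (sum_sq_le_sq_sum_of_nonneg fun _ _ => abs_nonneg _)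
    _ = _ := Real.sqrt_sq (sum_nonneg fun _ _ => abs_nonneg _)

theorem sum_groupNorm_le_sum_abs (β : ((k : Fin r) × Fin (p k)) → ℝ) :
    ∑ k, groupNorm w β k ≤ ∑ c, |w c * β c| :=
  (sum_le_sum fun k _ => groupNorm_le_sum_abs w β k).trans_eq
    (Fintype.sum_sigma fun c => |w c * β c|).symm

theorem sum_groupNorm_add_single_le (β : ((k : Fin r) × Fin (p k)) → ℝ)
    (c : (k : Fin r) × Fin (p k)) (t : ℝ) :
    ∑ k, groupNorm w (β + Pi.single c t) k ≤ ∑ k, groupNorm w β k + |w c * t| := by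
  calc ∑ k, groupNorm w (β + Pi.single c t) k
      ≤ ∑ k, groupNorm w β k + ∑ k, groupNorm w (Pi.single c t) k := by
        rw [← sum_add_distrib]
        exact sum_le_sum fun k _ => groupNorm_add_le w _ _ k
    _ ≤ ∑ k, groupNorm w β k + ∑ c', |w c' * (Pi.single c t : _ → ℝ) c'| := by
        gcongr; exact sum_groupNorm_le_sum_abs w _
    _ = _ := by rw [Fintype.sum_eq_single c fun c' hc' => by simp [hc']]; simp

theorem groupNorm_sub_groupNorm_add_le (βo ν : ((k : Fin r) × Fin (p k)) → ℝ) (k : Fin r) :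
    groupNorm w βo k - groupNorm w (βo + ν) k
      ≤ (if ∀ j : Fin (p k), βo ⟨k, j⟩ = 0 then 0 else groupNorm w ν k)
        - (if ∀ j : Fin (p k), βo ⟨k, j⟩ = 0 then groupNorm w ν k else 0) := by
  split_ifs with hβo
  · rw [groupNorm_congr w (ν := 0) hβo, groupNorm_congr w (β := βo + ν) (ν := ν) (by simp [hβo])]
    simp [groupNorm]
  · have := groupNorm_add_le w (βo + ν) (-ν) k
    rw [groupNorm_neg, add_neg_cancel_right] at this
    linarith

theorem inCone_of_le {βo ν : ((k : Fin r) × Fin (p k)) → ℝ} {a : ℝ}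
    (h : -(a * ∑ c, |w c * ν c|) ≤ ∑ k, (groupNorm w βo k - groupNorm w (βo + ν) k)) :
    InCone βo w a ν := by
  have := h.trans (sum_le_sum fun k _ => groupNorm_sub_groupNorm_add_le w βo ν k)
  rw [sum_sub_distrib] at this
  unfold InCone
  linarith

end GroupNorm

theorem ConvexOn.deriv_mul_sub_le {f : ℝ → ℝ} (hf : ConvexOn ℝ Set.univ f) {x : ℝ}
    (hx : DifferentiableAt ℝ f x) (y : ℝ) : deriv f x * (y - x) ≤ f y - f x := by
  rcases lt_trichotomy x y with hxy | rfl | hyx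
  · have := hf.deriv_le_slope (Set.mem_univ x) (Set.mem_univ y) hxy hx
    rwa [slope_def_field, le_div_iff₀ (sub_pos.2 hxy)] at this
  · simp
  · have := hf.slope_le_deriv (Set.mem_univ y) (Set.mem_univ x) hyx hx
    rw [slope_def_field, div_le_iff₀ (sub_pos.2 hyx)] at this
    linarith

theorem HasDerivAt.neg_le_of_le_add_mul {f : ℝ → ℝ} {f' C x : ℝ} (hf : HasDerivAt f f' x)
    (h : ∀ t > 0, f x ≤ f (x + t) + C * t) : -C ≤ f' := by
  have hslope : Tendsto (slope f x) (𝓝[>] x) (𝓝 f') :=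
    (hasDerivAt_iff_tendsto_slope.1 hf).mono_left (nhdsWithin_mono _ fun t ht => ne_of_gt ht)
  refine ge_of_tendsto hslope (eventually_nhdsWithin_of_forall fun t (ht : x < t) => ?_)
  rw [slope_def_field, le_div_iff₀ (sub_pos.2 ht)]
  have := h (t - x) (sub_pos.2 ht)
  rw [add_sub_cancel] at this
  linarith

section Loss

variable {Ω : Type*} {n r : ℕ} {p : Fin r → ℕ}
  (X : Fin n → ((k : Fin r) × Fin (p k)) → ℝ) (γ : ℝ → ℝ) (y : Fin n → Ω → ℝ) (ω : Ω)

theorem dotRow_add (i : Fin n) (β ν : ((k : Fin r) × Fin (p k)) → ℝ) :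
    dotRow X i (β + ν) = dotRow X i β + dotRow X i ν :=
  dotProduct_add _ _ _

theorem dotRow_smul (i : Fin n) (t : ℝ) (β : ((k : Fin r) × Fin (p k)) → ℝ) :
    dotRow X i (t • β) = t * dotRow X i β :=
  dotProduct_smul _ _ _

noncomputable def lossGrad (β : ((k : Fin r) × Fin (p k)) → ℝ) (c : (k : Fin r) × Fin (p k)) :
    ℝ :=
  ∑ i, (deriv γ (dotRow X i β) - y i ω) * X i c

noncomputable def groupLassoObjective (w : ((k : Fin r) × Fin (p k)) → ℝ) (lam : ℝ)
    (β : ((k : Fin r) × Fin (p k)) → ℝ) : ℝ :=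
  loss X γ y ω β + lam * ∑ k, groupNorm w β k

theorem sum_lossGrad_mul (β ν : ((k : Fin r) × Fin (p k)) → ℝ) :
    ∑ c, lossGrad X γ y ω β c * ν c
      = ∑ i, (deriv γ (dotRow X i β) - y i ω) * dotRow X i ν := by
  simp_rw [lossGrad, dotRow, sum_mul, mul_sum, mul_assoc]
  exact sum_comm

theorem sum_lossGrad_mul_le_loss_sub (hγ : ConvexOn ℝ Set.univ γ) (hγ' : Differentiable ℝ γ)
    (β ν : ((k : Fin r) × Fin (p k)) → ℝ) :
    ∑ c, lossGrad X γ y ω β c * ν c ≤ loss X γ y ω (β + ν) - loss X γ y ω β := by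
  rw [sum_lossGrad_mul, loss, loss, ← sum_sub_distrib]
  refine sum_le_sum fun i _ => ?_
  have := hγ.deriv_mul_sub_le (hγ' (dotRow X i β)) (dotRow X i (β + ν))
  rw [dotRow_add] at this ⊢
  linarith

theorem hasDerivAt_loss_add_smul (hγ' : Differentiable ℝ γ) (b u : ((k : Fin r) × Fin (p k)) → ℝ) :
    HasDerivAt (fun t : ℝ => loss X γ y ω (b + t • u)) (∑ c, lossGrad X γ y ω b c * u c) 0 := by
  rw [sum_lossGrad_mul]
  simp only [loss, dotRow_add, dotRow_smul]
  refine HasDerivAt.fun_sum fun i _ => ?_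
  have hline : HasDerivAt (fun t : ℝ => dotRow X i b + t * dotRow X i u) (dotRow X i u) 0 := by
    simpa using (hasDerivAt_mul_const (dotRow X i u)).const_add (dotRow X i b)
  have hγline := (hγ' (dotRow X i b)).hasDerivAt.comp_of_eq 0 hline (by simp)
  exact (hγline.sub (hline.const_mul (y i ω))).congr_deriv (by ring)

theorem abs_lossGrad_le_of_isMinimizer (hγ' : Differentiable ℝ γ)
    {w : ((k : Fin r) × Fin (p k)) → ℝ} {lam : ℝ} (hlam : 0 ≤ lam)
    {b : ((k : Fin r) × Fin (p k)) → ℝ}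
    (hb : ∀ β, groupLassoObjective X γ y ω w lam b ≤ groupLassoObjective X γ y ω w lam β)
    (c : (k : Fin r) × Fin (p k)) : |lossGrad X γ y ω b c| ≤ lam * |w c| := by
  have hdir : ∀ s, -(lam * |w c * s|) ≤ lossGrad X γ y ω b c * s := fun s => by
    have hder := hasDerivAt_loss_add_smul X γ y ω hγ' b (Pi.single c s)
    rw [Fintype.sum_eq_single c fun c' hc' => by simp [hc'], Pi.single_eq_same] at hder
    refine hder.neg_le_of_le_add_mul fun t ht => ?_
    have hstep : b + t • Pi.single c s = b + Pi.single c (t * s) := by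
      rw [← smul_eq_mul, Pi.single_smul]
    have habs : |w c * (t * s)| = |w c * s| * t := by
      rw [abs_mul, abs_mul, abs_mul, abs_of_pos ht]; ring
    have hpen := sum_groupNorm_add_single_le w b c (t * s)
    rw [habs] at hpen
    have hmin := hb (b + Pi.single c (t * s))
    rw [zero_smul, add_zero, zero_add, hstep]
    unfold groupLassoObjective at hmin
    linarith [mul_le_mul_of_nonneg_left hpen hlam]
  have hplus := hdir 1
  have hminus := hdir (-1)
  simp only [mul_one, mul_neg, abs_neg] at hplus hminus
  exact abs_le.2 ⟨hplus, by linarith⟩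

theorem gradDiff_eq_lossGrad_sub (βo ν : ((k : Fin r) × Fin (p k)) → ℝ)
    (c : (k : Fin r) × Fin (p k)) :
    gradDiff X γ βo ν c = lossGrad X γ y ω (βo + ν) c - lossGrad X γ y ω βo c := by
  rw [gradDiff, lossGrad, lossGrad, ← sum_sub_distrib]
  exact sum_congr rfl fun i _ => by ring

theorem inCone_of_isMinimizer (hγ : ConvexOn ℝ Set.univ γ) (hγ' : Differentiable ℝ γ)
    {βo w : ((k : Fin r) × Fin (p k)) → ℝ} (hw : ∀ c, 0 ≤ w c) {a lam : ℝ} (hlam : 0 < lam)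
    (hgrad : ∀ c, |lossGrad X γ y ω βo c| ≤ a * lam * w c) {ν : ((k : Fin r) × Fin (p k)) → ℝ}
    (hmin : ∀ β, groupLassoObjective X γ y ω w lam (βo + ν)
      ≤ groupLassoObjective X γ y ω w lam β) :
    InCone βo w a ν := by
  have hgradν : -(a * lam * ∑ c, |w c * ν c|) ≤ ∑ c, lossGrad X γ y ω βo c * ν c := by
    rw [neg_le, ← sum_neg_distrib, mul_sum]
    refine sum_le_sum fun c _ => ?_
    calc -(lossGrad X γ y ω βo c * ν c) ≤ |lossGrad X γ y ω βo c| * |ν c| := by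
          rw [← abs_mul]; exact neg_le_abs _
      _ ≤ a * lam * w c * |ν c| := by gcongr; exact hgrad c
      _ = a * lam * |w c * ν c| := by rw [abs_mul, abs_of_nonneg (hw c)]; ring
  have hconv := sum_lossGrad_mul_le_loss_sub X γ y ω hγ hγ' βo ν
  have hβo := hmin βo
  unfold groupLassoObjective at hβo
  refine inCone_of_le w (le_of_mul_le_mul_left ?_ hlam)
  rw [sum_sub_distrib]
  linarith

theorem cif_mul_supNorm_le {βo w ν : ((k : Fin r) × Fin (p k)) → ℝ} {a : ℝ}
    (hν : InCone βo w a ν) :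
    cif X γ βo w a * supNorm ν ≤ supNorm (fun c => gradDiff X γ βo ν c / w c) := by
  rcases eq_or_ne ν 0 with rfl | hν0
  · simp [supNorm_eq_norm]
  · have hpos : 0 < supNorm ν := by rw [supNorm_eq_norm]; exact norm_pos_iff.2 hν0
    rw [← le_div_iff₀ hpos]
    refine csInf_le ⟨0, ?_⟩ ⟨ν, hν0, hν, rfl⟩
    rintro _ ⟨ν', -, -, rfl⟩
    simp only [supNorm_eq_norm]
    positivity

theorem supNorm_sub_le_of_isMinimizer (hγ : ConvexOn ℝ Set.univ γ) (hγ' : Differentiable ℝ γ)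
    {βo w : ((k : Fin r) × Fin (p k)) → ℝ} (hw : ∀ c, 0 < w c) {a lam : ℝ} (ha : 0 ≤ a)
    (hlam : 0 < lam) (hζ : 0 < cif X γ βo w a)
    (hgrad : ∀ c, |lossGrad X γ y ω βo c| ≤ a * lam * w c) {b : ((k : Fin r) × Fin (p k)) → ℝ}
    (hmin : ∀ β, groupLassoObjective X γ y ω w lam b ≤ groupLassoObjective X γ y ω w lam β) :
    supNorm (fun c => b c - βo c) ≤ (1 + a) * lam / cif X γ βo w a := by
  have hb : βo + (b - βo) = b := add_sub_cancel βo b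
  have hcone : InCone βo w a (b - βo) :=
    inCone_of_isMinimizer X γ y ω hγ hγ' (fun c => (hw c).le) hlam hgrad (by rwa [hb])
  have hgradDiff : supNorm (fun c => gradDiff X γ βo (b - βo) c / w c) ≤ (1 + a) * lam := by
    rw [supNorm_eq_norm]
    refine (pi_norm_le_iff_of_nonneg (by positivity)).2 fun c => ?_
    rw [Real.norm_eq_abs, abs_div, abs_of_pos (hw c), div_le_iff₀ (hw c),
      gradDiff_eq_lossGrad_sub X γ y ω, hb]
    calc _ ≤ |lossGrad X γ y ω b c| + |lossGrad X γ y ω βo c| := abs_sub _ _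
      _ ≤ lam * |w c| + a * lam * w c :=
          add_le_add (abs_lossGrad_le_of_isMinimizer X γ y ω hγ' hlam.le hmin c) (hgrad c)
      _ = (1 + a) * lam * w c := by rw [abs_of_pos (hw c)]; ring
  rw [le_div_iff₀ hζ, mul_comm]
  exact (cif_mul_supNorm_le X γ hcone).trans hgradDiff

end Loss

section Subgaussian

variable {Ω : Type*} [MeasurableSpace Ω] {P : Measure Ω}

theorem hasSubgaussianMGF_of_lintegral_exp_le {Z : Ω → ℝ} (hZ : AEMeasurable Z P) {c : ℝ≥0}
    (h : ∀ u : ℝ, ∫⁻ ω, ENNReal.ofReal (exp (u * Z ω)) ∂P ≤ ENNReal.ofReal (exp (c * u ^ 2 / 2))) :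
    HasSubgaussianMGF Z c P where
  integrable_exp_mul u := by
    refine ⟨(hZ.const_mul u).exp.aestronglyMeasurable, ?_⟩
    rw [hasFiniteIntegral_iff_ofReal (ae_of_all _ fun ω => (exp_pos _).le)]
    exact (h u).trans_lt ENNReal.ofReal_lt_top
  mgf_le u := by
    rw [mgf, integral_eq_lintegral_of_nonneg_ae (ae_of_all _ fun ω => (exp_pos _).le)
      (hZ.const_mul u).exp.aestronglyMeasurable]
    exact ENNReal.toReal_le_of_le_ofReal (exp_pos _).le (h u)

theorem ProbabilityTheory.HasSubgaussianMGF.mono {Z : Ω → ℝ} {c d : ℝ≥0}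
    (h : HasSubgaussianMGF Z c P) (hcd : c ≤ d) : HasSubgaussianMGF Z d P where
  integrable_exp_mul := h.integrable_exp_mul
  mgf_le t := (h.mgf_le t).trans (exp_le_exp.2 (by gcongr))

theorem ProbabilityTheory.HasSubgaussianMGF.measure_abs_ge_le [IsFiniteMeasure P] {Z : Ω → ℝ}
    {c : ℝ≥0} (h : HasSubgaussianMGF Z c P) {ε : ℝ} (hε : 0 ≤ ε) :
    P.real {ω | ε ≤ |Z ω|} ≤ 2 * exp (-ε ^ 2 / (2 * c)) := by
  calc P.real {ω | ε ≤ |Z ω|} ≤ P.real ({ω | ε ≤ Z ω} ∪ {ω | ε ≤ (-Z) ω}) :=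
        measureReal_mono fun ω (hω : ε ≤ |Z ω|) => le_abs.1 hω
    _ ≤ P.real {ω | ε ≤ Z ω} + P.real {ω | ε ≤ (-Z) ω} := measureReal_union_le _ _
    _ ≤ _ := by linarith [h.measure_ge_le hε, h.neg.measure_ge_le hε]

theorem hasSubgaussianMGF_sum_mul {ι : Type*} [Fintype ι] {Z : ι → Ω → ℝ}
    (hindep : iIndepFun Z P) {c : ℝ≥0} (h : ∀ i, HasSubgaussianMGF (Z i) c P) (x : ι → ℝ) :
    HasSubgaussianMGF (fun ω => ∑ i, x i * Z i ω) (∑ i, ⟨x i ^ 2, sq_nonneg _⟩ * c) P :=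
  HasSubgaussianMGF.sum_of_iIndepFun
    (hindep.comp (fun i v => x i * v) fun i => measurable_const_mul (x i))
    fun i _ => (h i).const_mul (x i)

end Subgaussian

section Tail

variable {Ω : Type*} [MeasurableSpace Ω] {P : Measure Ω} {n r : ℕ} {p : Fin r → ℕ}
  (X : Fin n → ((k : Fin r) × Fin (p k)) → ℝ) (γ : ℝ → ℝ) {y : Fin n → Ω → ℝ}
  {βo : ((k : Fin r) × Fin (p k)) → ℝ}

theorem lossGrad_eq_neg_sum_mul_centered
    (hmean : ∀ i, ∫ ω, y i ω ∂P = deriv γ (dotRow X i βo)) (ω : Ω)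
    (c : (k : Fin r) × Fin (p k)) :
    lossGrad X γ y ω βo c = -∑ i, X i c * (y i ω - ∫ ω', y i ω' ∂P) := by
  rw [lossGrad, ← sum_neg_distrib]
  exact sum_congr rfl fun i _ => by rw [hmean]; ring

theorem colNorm_le_xW_mul {w : ((k : Fin r) × Fin (p k)) → ℝ} {c : (k : Fin r) × Fin (p k)}
    (hw : 0 < w c) : colNorm X c ≤ xW X w * w c := by
  rw [← div_le_iff₀ hw]
  exact le_ciSup (f := fun c => colNorm X c / w c) (Set.finite_range _).bddAbove c

theorem hasSubgaussianMGF_lossGrad (hymeas : ∀ i, Measurable (y i)) (hindep : iIndepFun y P)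
    (hmean : ∀ i, ∫ ω, y i ω ∂P = deriv γ (dotRow X i βo)) {σ : ℝ}
    (hsub : ∀ i, ∀ u : ℝ,
      ∫⁻ ω, ENNReal.ofReal (exp (u * (y i ω - ∫ ω', y i ω' ∂P))) ∂P
        ≤ ENNReal.ofReal (exp (σ ^ 2 * u ^ 2 / 2)))
    (c : (k : Fin r) × Fin (p k)) :
    HasSubgaussianMGF (fun ω => lossGrad X γ y ω βo c)
      ⟨σ ^ 2 * colNorm X c ^ 2, by positivity⟩ P := by
  have hcentered : ∀ i, HasSubgaussianMGF (fun ω => y i ω - ∫ ω', y i ω' ∂P)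
      ⟨σ ^ 2, sq_nonneg σ⟩ P := fun i =>
    hasSubgaussianMGF_of_lintegral_exp_le ((hymeas i).sub_const _).aemeasurable (hsub i)
  have hindep' : iIndepFun (fun i ω => y i ω - ∫ ω', y i ω' ∂P) P :=
    hindep.comp (fun i v => v - ∫ ω', y i ω' ∂P) fun i => measurable_id.sub_const _
  have hfun : (fun ω => lossGrad X γ y ω βo c)
      = -fun ω => ∑ i, X i c * (y i ω - ∫ ω', y i ω' ∂P) := by
    funext ω
    simp [lossGrad_eq_neg_sum_mul_centered X γ hmean]
  rw [hfun]
  refine (hasSubgaussianMGF_sum_mul hindep' hcentered fun i => X i c).neg.mono (le_of_eq ?_)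
  apply NNReal.eq
  simp only [NNReal.coe_sum, colNorm,
    Real.sq_sqrt (sum_nonneg fun i _ => sq_nonneg (X i c)), mul_sum]
  exact sum_congr rfl fun i _ => mul_comm (X i c ^ 2) (σ ^ 2)

theorem measureReal_le_abs_lossGrad_le [IsFiniteMeasure P] (hymeas : ∀ i, Measurable (y i))
    (hindep : iIndepFun y P) (hmean : ∀ i, ∫ ω, y i ω ∂P = deriv γ (dotRow X i βo)) {σ : ℝ}
    (hsub : ∀ i, ∀ u : ℝ,
      ∫⁻ ω, ENNReal.ofReal (exp (u * (y i ω - ∫ ω', y i ω' ∂P))) ∂P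
        ≤ ENNReal.ofReal (exp (σ ^ 2 * u ^ 2 / 2)))
    {w : ((k : Fin r) × Fin (p k)) → ℝ} {c : (k : Fin r) × Fin (p k)} (hw : 0 < w c)
    {s : ℝ} (hs : 0 ≤ s) :
    P.real {ω | s * w c ≤ |lossGrad X γ y ω βo c|}
      ≤ 2 * exp (-s ^ 2 / (2 * σ ^ 2 * xW X w ^ 2)) := by
  have hsubG := (hasSubgaussianMGF_lossGrad X γ hymeas hindep hmean hsub c).mono
    (d := (⟨σ ^ 2 * (xW X w * w c) ^ 2, by positivity⟩ : ℝ≥0)) (by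
      change σ ^ 2 * colNorm X c ^ 2 ≤ σ ^ 2 * (xW X w * w c) ^ 2
      gcongr
      exacts [Real.sqrt_nonneg _, colNorm_le_xW_mul X hw])
  refine (hsubG.measure_abs_ge_le (by positivity)).trans_eq ?_
  have hden : 2 * (σ ^ 2 * (xW X w * w c) ^ 2) = 2 * σ ^ 2 * xW X w ^ 2 * w c ^ 2 := by ring
  show 2 * exp (-(s * w c) ^ 2 / (2 * (σ ^ 2 * (xW X w * w c) ^ 2))) = _
  rw [mul_pow, ← neg_mul, hden, mul_div_mul_right _ _ (pow_ne_zero 2 hw.ne')]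

end Tail

theorem glamer_lemma1_general
    {Ω : Type*} [MeasurableSpace Ω] (P : Measure Ω) [IsProbabilityMeasure P]
    {n r : ℕ} {p : Fin r → ℕ}
    (X : Fin n → ((k : Fin r) × Fin (p k)) → ℝ)
    (γ : ℝ → ℝ) (hγconv : ConvexOn ℝ Set.univ γ) (hγdiff : Differentiable ℝ γ)
    (y : Fin n → Ω → ℝ) (hymeas : ∀ i, Measurable (y i))
    (hindep : iIndepFun y P)
    (βo : ((k : Fin r) × Fin (p k)) → ℝ)
    (hmean : ∀ i, ∫ ω, y i ω ∂P = deriv γ (dotRow X i βo))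
    (σ : ℝ)
    (hsub : ∀ i, ∀ u : ℝ,
      ∫⁻ ω, ENNReal.ofReal (Real.exp (u * (y i ω - ∫ ω', y i ω' ∂P))) ∂P
        ≤ ENNReal.ofReal (Real.exp (σ ^ 2 * u ^ 2 / 2)))
    (w : ((k : Fin r) × Fin (p k)) → ℝ) (hw : ∀ c, 0 < w c)
    (a lam : ℝ) (ha : a ∈ Set.Ioo (0 : ℝ) 1) (hlam : 0 < lam)
    (βhat : Ω → ((k : Fin r) × Fin (p k)) → ℝ)
    (hmin : ∀ᵐ ω ∂P, ∀ β : ((k : Fin r) × Fin (p k)) → ℝ,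
      loss X γ y ω (βhat ω) + lam * ∑ k : Fin r, groupNorm w (βhat ω) k
        ≤ loss X γ y ω β + lam * ∑ k : Fin r, groupNorm w β k)
    (hζ : 0 < cif X γ βo w a) :
    P {ω | supNorm (fun c => βhat ω c - βo c) > (1 + a) * lam / cif X γ βo w a}
      ≤ ENNReal.ofReal
        (2 * (Fintype.card ((k : Fin r) × Fin (p k))) *
          Real.exp (-(a ^ 2 * lam ^ 2) / (2 * σ ^ 2 * (xW X w) ^ 2))) := by
  set far := {ω | supNorm (fun c => βhat ω c - βo c) > (1 + a) * lam / cif X γ βo w a}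
  set bad := fun c => {ω | a * lam * w c ≤ |lossGrad X γ y ω βo c|}
  have hfar : ∀ᵐ ω ∂P, ω ∈ far → ω ∈ ⋃ c, bad c := by
    filter_upwards [hmin] with ω hω hωfar
    by_contra hnear
    refine (not_le.2 hωfar) (supNorm_sub_le_of_isMinimizer X γ y ω hγconv hγdiff hw ha.1.le hlam hζ
      (fun c => ?_) hω)
    exact (not_le.1 fun h => hnear (Set.mem_iUnion.2 ⟨c, h⟩)).le
  rw [ENNReal.le_ofReal_iff_toReal_le (measure_ne_top _ _) (by positivity)]
  calc P.real far ≤ P.real (⋃ c, bad c) :=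
        ENNReal.toReal_mono (measure_ne_top _ _) (measure_mono_ae hfar)
    _ ≤ ∑ c, P.real (bad c) := measureReal_iUnion_fintype_le _
    _ ≤ ∑ _c : (k : Fin r) × Fin (p k), 2 * exp (-(a * lam) ^ 2 / (2 * σ ^ 2 * xW X w ^ 2)) :=
        sum_le_sum fun c _ => measureReal_le_abs_lossGrad_le X γ hymeas hindep hmean hsub (hw c)
          (mul_nonneg ha.1.le hlam.le)
    _ = _ := by rw [sum_const, card_univ, nsmul_eq_mul, mul_pow]; ring

/-- Lemma 1: for independent subgaussian responses in a GLM-type model and a Group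
Lasso estimator `β̂`,
`P(|β̂ − β°|_∞ > (1+a)λ ζ_{a,W}⁻¹) ≤ 2p exp(−a²λ²/(2σ²x_W²))`. -/
theorem glamer_lemma1
    {Ω : Type*} [MeasurableSpace Ω] (P : Measure Ω) [IsProbabilityMeasure P]
    {n r : ℕ} {p : Fin r → ℕ}
    (X : Fin n → ((k : Fin r) × Fin (p k)) → ℝ)
    (γ : ℝ → ℝ) (hγconv : ConvexOn ℝ Set.univ γ) (hγdiff : Differentiable ℝ γ)
    (y : Fin n → Ω → ℝ) (hymeas : ∀ i, Measurable (y i))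
    (hindep : iIndepFun y P)
    (βo : ((k : Fin r) × Fin (p k)) → ℝ)
    (hmean : ∀ i, ∫ ω, y i ω ∂P = deriv γ (dotRow X i βo))
    (σ : ℝ) (hσ : 0 < σ)
    (hsub : ∀ i, ∀ u : ℝ,
      ∫⁻ ω, ENNReal.ofReal (Real.exp (u * (y i ω - ∫ ω', y i ω' ∂P))) ∂P
        ≤ ENNReal.ofReal (Real.exp (σ ^ 2 * u ^ 2 / 2)))
    (w : ((k : Fin r) × Fin (p k)) → ℝ) (hw : ∀ c, 0 < w c)
    (a lam : ℝ) (ha : a ∈ Set.Ioo (0 : ℝ) 1) (hlam : 0 < lam)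
    (βhat : Ω → ((k : Fin r) × Fin (p k)) → ℝ) (hβhat : Measurable βhat)
    (hmin : ∀ᵐ ω ∂P, ∀ β : ((k : Fin r) × Fin (p k)) → ℝ,
      loss X γ y ω (βhat ω) + lam * ∑ k : Fin r, groupNorm w (βhat ω) k
        ≤ loss X γ y ω β + lam * ∑ k : Fin r, groupNorm w β k)
    (hζ : 0 < cif X γ βo w a) :
    P {ω | supNorm (fun c => βhat ω c - βo c) > (1 + a) * lam / cif X γ βo w a}
      ≤ ENNReal.ofReal
        (2 * (Fintype.card ((k : Fin r) × Fin (p k))) *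
          Real.exp (-(a ^ 2 * lam ^ 2) / (2 * σ ^ 2 * (xW X w) ^ 2))) :=
  glamer_lemma1_general P X γ hγconv hγdiff y hymeas hindep βo hmean σ hsub w hw a lam ha hlam βhat
    hmin hζ
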